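/- Let C be a subgroup of G = Z2^k1 × Z4^k2 × Q8^k3 such that Φ(C) is a Hadamard code of length n = k1+2k2+4k3 (so in particular every element c ∈ C with c ∉ {e, u} satisfies w(Φ(c)) = n/2, where u is the unique element with Φ(u) the all-ones vector). If a, b ∈ C both have order 4, a² ≠ u, and the commutator (a,b) ≠ e, then (a,b) = a². -/
import Mathlib


/-- `Q8` is the quaternion group of order 8. -/
abbrev Q8 := QuaternionGroup 2

/-- The Gray map of `Q8`: `1 ↦ 0000`, `a ↦ 0101`, `a² ↦ 1111`, `a³ ↦ 1010`,
`b ↦ 0110`, `ab ↦ 1100`, `a²b ↦ 1001`, `a³b ↦ 0011`.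
(In `QuaternionGroup 2` one has `aᵏ·b = xa (-k)`.) -/
def grayQ : Q8 → Fin 4 → ZMod 2
  | .a i => ![![0,0,0,0], ![0,1,0,1], ![1,1,1,1], ![1,0,1,0]] i
  | .xa i => ![![0,1,1,0], ![0,0,1,1], ![1,0,0,1], ![1,1,0,0]] i
/-- The ambient group `Z2^k1 × Z4^k2 × Q8^k3` (written multiplicatively). -/
abbrev Amb (k1 k2 k3 : ℕ) :=
  (Fin k1 → Multiplicative (ZMod 2)) × (Fin k2 → Multiplicative (ZMod 4)) × (Fin k3 → Q8)

/-- The binary space `Z2^(k1+2k2+4k3)` presented in blocks. -/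
abbrev BinSp (k1 k2 k3 : ℕ) :=
  (Fin k1 → ZMod 2) × (Fin k2 → Fin 2 → ZMod 2) × (Fin k3 → Fin 4 → ZMod 2)

/-- The Gray map of `Z4`: `0 ↦ 00`, `1 ↦ 01`, `2 ↦ 11`, `3 ↦ 10`. -/
def grayZ4 (y : Multiplicative (ZMod 4)) : Fin 2 → ZMod 2 :=
  ![![0,0], ![0,1], ![1,1], ![1,0]] (Multiplicative.toAdd y)

/-- The generalized Gray map `Φ`. -/
def Phi {k1 k2 k3 : ℕ} (g : Amb k1 k2 k3) : BinSp k1 k2 k3 :=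
  (fun i => Multiplicative.toAdd (g.1 i), fun i => grayZ4 (g.2.1 i), fun i => grayQ (g.2.2 i))

/-- Hamming weight on the binary space. -/
def wtB {k1 k2 k3 : ℕ} (v : BinSp k1 k2 k3) : ℕ :=
  (Finset.univ.filter fun i => v.1 i ≠ 0).card
    + ∑ i, (Finset.univ.filter fun j => v.2.1 i j ≠ 0).card
    + ∑ i, (Finset.univ.filter fun j => v.2.2 i j ≠ 0).card

/-- The element `u` of `Z2^k1 × Z4^k2 × Q8^k3` whose Gray image is the all-ones
vector: it has the unique order-2 element of each factor in every coordinate. -/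
def uElem {k1 k2 k3 : ℕ} : Amb k1 k2 k3 :=
  (fun _ => Multiplicative.ofAdd (1 : ZMod 2),
   fun _ => Multiplicative.ofAdd (2 : ZMod 4),
   fun _ => QuaternionGroup.a 2)


section Aux

open Finset

lemma q8_comm_dichot (x y : Q8) : x⁻¹*y⁻¹*x*y = 1 ∨
    (x⁻¹*y⁻¹*x*y = QuaternionGroup.a 2 ∧ x^2 = QuaternionGroup.a 2 ∧
      y^2 = QuaternionGroup.a 2) := by revert x y; decide

lemma z2_sq (x : Multiplicative (ZMod 2)) : x^2 = 1 := by revert x; decide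

lemma z2_comm (x y : Multiplicative (ZMod 2)) : x⁻¹*y⁻¹*x*y = 1 := by revert x y; decide

lemma z4_comm (x y : Multiplicative (ZMod 4)) : x⁻¹*y⁻¹*x*y = 1 := by revert x y; decide

lemma z4_sq (y : Multiplicative (ZMod 4)) :
    y^2 = 1 ∨ y^2 = Multiplicative.ofAdd 2 := by revert y; decide

lemma wQ_one : (Finset.univ.filter fun j => grayQ 1 j ≠ 0).card = 0 := by decide
lemma wQ_a2 : (Finset.univ.filter fun j => grayQ (QuaternionGroup.a 2) j ≠ 0).card = 4 := by
  decide
lemma wZ4_one : (Finset.univ.filter fun j => grayZ4 1 j ≠ 0).card = 0 := by decide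
lemma wZ4_two :
    (Finset.univ.filter fun j => grayZ4 (Multiplicative.ofAdd 2) j ≠ 0).card = 2 := by decide

/-- Weight of the Gray image of a "central" element. -/
lemma wt_central {k1 k2 k3 : ℕ} (g : Amb k1 k2 k3)
    (h1 : ∀ i, g.1 i = 1)
    (h2 : ∀ i, g.2.1 i = 1 ∨ g.2.1 i = Multiplicative.ofAdd 2)
    (h3 : ∀ i, g.2.2 i = 1 ∨ g.2.2 i = QuaternionGroup.a 2) :
    wtB (Phi g) = 2 * (Finset.univ.filter fun i => g.2.1 i ≠ 1).card
      + 4 * (Finset.univ.filter fun i => g.2.2 i ≠ 1).card := by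
  classical
  have e1 : (Finset.univ.filter fun i => Multiplicative.toAdd (g.1 i) ≠ 0).card = 0 := by
    rw [Finset.card_eq_zero, Finset.filter_eq_empty_iff]
    intro i _
    rw [h1 i]
    decide
  have e2 : ∀ i, (Finset.univ.filter fun j => grayZ4 (g.2.1 i) j ≠ 0).card
      = if g.2.1 i ≠ 1 then 2 else 0 := by
    intro i
    rcases h2 i with h | h <;> rw [h] <;> decide
  have e3 : ∀ i, (Finset.univ.filter fun j => grayQ (g.2.2 i) j ≠ 0).card
      = if g.2.2 i ≠ 1 then 4 else 0 := by
    intro i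
    rcases h3 i with h | h <;> rw [h] <;> decide
  have s2 : ∑ i, (Finset.univ.filter fun j => grayZ4 (g.2.1 i) j ≠ 0).card
      = 2 * (Finset.univ.filter fun i => g.2.1 i ≠ 1).card := by
    rw [Finset.sum_congr rfl fun i _ => e2 i, ← Finset.sum_filter, Finset.sum_const,
      smul_eq_mul, mul_comm]
  have s3 : ∑ i, (Finset.univ.filter fun j => grayQ (g.2.2 i) j ≠ 0).card
      = 4 * (Finset.univ.filter fun i => g.2.2 i ≠ 1).card := by
    rw [Finset.sum_congr rfl fun i _ => e3 i, ← Finset.sum_filter, Finset.sum_const,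
      smul_eq_mul, mul_comm]
  show (Finset.univ.filter fun i => Multiplicative.toAdd (g.1 i) ≠ 0).card
      + ∑ i, (Finset.univ.filter fun j => grayZ4 (g.2.1 i) j ≠ 0).card
      + ∑ i, (Finset.univ.filter fun j => grayQ (g.2.2 i) j ≠ 0).card = _
  rw [e1, s2, s3]
  ring

end Aux

/-- In a subgroup `C` whose Gray image is a Hadamard code of length
`n = k1+2k2+4k3` (every codeword other than `0` and the all-ones vector has
weight `n/2`), if `a,b ∈ C` have order 4, `a² ≠ u` and `(a,b) ≠ 1`, then
`(a,b) = a²`. -/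
theorem hadamard_commutator_eq_sq {k1 k2 k3 : ℕ} (C : Subgroup (Amb k1 k2 k3))
    (hH : ∀ c ∈ C, c ≠ 1 → c ≠ uElem → wtB (Phi c) = (k1 + 2 * k2 + 4 * k3) / 2)
    (a b : Amb k1 k2 k3) (ha : a ∈ C) (hb : b ∈ C)
    (ha4 : orderOf a = 4) (hb4 : orderOf b = 4)
    (hau : a ^ 2 ≠ uElem) (hcn : a⁻¹ * b⁻¹ * a * b ≠ 1) :
    a⁻¹ * b⁻¹ * a * b = a ^ 2 := by
  classical
  set c : Amb k1 k2 k3 := a⁻¹ * b⁻¹ * a * b with hcdef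
  have hcC : c ∈ C := mul_mem (mul_mem (mul_mem (inv_mem ha) (inv_mem hb)) ha) hb
  have hdC : a ^ 2 ∈ C := pow_mem ha 2
  -- coordinatewise facts for the commutator c
  have hc1 : ∀ i, c.1 i = 1 := fun i => z2_comm (a.1 i) (b.1 i)
  have hc21 : ∀ i, c.2.1 i = 1 := fun i => z4_comm (a.2.1 i) (b.2.1 i)
  have hc22 : ∀ i : Fin k3, c.2.2 i = 1 ∨
      (c.2.2 i = QuaternionGroup.a 2 ∧ (a.2.2 i)^2 = QuaternionGroup.a 2 ∧
        (b.2.2 i)^2 = QuaternionGroup.a 2) := fun i => q8_comm_dichot (a.2.2 i) (b.2.2 i)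
  have hd1 : ∀ i, (a ^ 2).1 i = 1 := fun i => z2_sq (a.1 i)
  have hd21 : ∀ i, (a ^ 2).2.1 i = 1 ∨ (a ^ 2).2.1 i = Multiplicative.ofAdd 2 :=
    fun i => z4_sq (a.2.1 i)
  have hd22 : ∀ i, (a ^ 2).2.2 i = 1 ∨ (a ^ 2).2.2 i = QuaternionGroup.a 2 := by
    intro i
    show (a.2.2 i)^2 = 1 ∨ (a.2.2 i)^2 = QuaternionGroup.a 2
    rcases q8_comm_dichot (a.2.2 i) (a.2.2 i) with _ | ⟨_, h, _⟩
    · rcases (show ∀ x : Q8, x^2 = 1 ∨ x^2 = QuaternionGroup.a 2 by decide) (a.2.2 i) with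
        h | h
      · exact Or.inl h
      · exact Or.inr h
    · exact Or.inr h
  by_cases hcu : c = uElem
  · -- then a² = u, contradiction
    exfalso
    apply hau
    refine Prod.ext ?_ (Prod.ext ?_ ?_)
    · funext i
      exact absurd ((hc1 i).symm.trans (congrFun (congrArg Prod.fst hcu) i))
        (show (1 : Multiplicative (ZMod 2)) ≠ Multiplicative.ofAdd 1 by decide)
    · funext i
      exact absurd ((hc21 i).symm.trans
        (congrFun (congrArg (fun g => g.2.1) hcu) i))
        (show (1 : Multiplicative (ZMod 4)) ≠ Multiplicative.ofAdd 2 by decide)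
    · funext i
      have h := congrFun (congrArg (fun g : Amb k1 k2 k3 => g.2.2) hcu) i
      rcases hc22 i with h1 | ⟨_, hsq, _⟩
      · exact absurd (h1.symm.trans h) (show (1 : Q8) ≠ QuaternionGroup.a 2 by decide)
      · exact hsq
  · have hdne1 : a ^ 2 ≠ 1 := by
      intro h
      have := orderOf_dvd_of_pow_eq_one h
      rw [ha4] at this
      omega
    have hwc := hH c hcC hcn hcu
    have hwd := hH (a ^ 2) hdC hdne1 hau
    rw [wt_central c hc1 (fun i => Or.inl (hc21 i)) (fun i => (hc22 i).imp id And.left)]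
      at hwc
    rw [wt_central (a ^ 2) hd1 hd21 hd22] at hwd
    set S := Finset.univ.filter fun i => c.2.2 i ≠ 1 with hS
    set T4 := Finset.univ.filter fun i => (a ^ 2).2.1 i ≠ 1 with hT4
    set T8 := Finset.univ.filter fun i => (a ^ 2).2.2 i ≠ 1 with hT8
    have hcS : (Finset.univ.filter fun i => c.2.1 i ≠ 1).card = 0 := by
      rw [Finset.card_eq_zero, Finset.filter_eq_empty_iff]
      intro i _
      simp [hc21 i]
    rw [hcS] at hwc
    have hsub : S ⊆ T8 := by
      intro i hi
      rw [hS, Finset.mem_filter] at hi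
      rcases hc22 i with h1 | ⟨_, hsq, _⟩
      · exact absurd h1 hi.2
      · rw [hT8, Finset.mem_filter]
        refine ⟨Finset.mem_univ i, ?_⟩
        show (a.2.2 i)^2 ≠ 1
        rw [hsq]
        decide
    have hle : S.card ≤ T8.card := Finset.card_le_card hsub
    have ht4 : T4.card = 0 := by omega
    have hcard : T8.card ≤ S.card := by omega
    have hST : S = T8 := Finset.eq_of_subset_of_card_le hsub hcard
    have hT4e : T4 = ∅ := Finset.card_eq_zero.mp ht4
    refine Prod.ext ?_ (Prod.ext ?_ ?_)
    · funext i
      rw [hc1 i, hd1 i]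
    · funext i
      rw [hc21 i]
      by_contra h
      have : i ∈ T4 := by
        rw [hT4, Finset.mem_filter]
        exact ⟨Finset.mem_univ i, fun he => h he.symm⟩
      rw [hT4e] at this
      exact absurd this (Finset.notMem_empty i)
    · funext i
      by_cases hi : i ∈ S
      · rcases hc22 i with h1 | ⟨hca, hsq, _⟩
        · rw [hS, Finset.mem_filter] at hi
          exact absurd h1 hi.2
        · show c.2.2 i = (a.2.2 i)^2
          rw [hca, hsq]
      · have hi8 : i ∉ T8 := hST ▸ hi
        rw [hS, Finset.mem_filter] at hi
        rw [hT8, Finset.mem_filter] at hi8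
        push_neg at hi hi8
        rw [hi (Finset.mem_univ i), hi8 (Finset.mem_univ i)]
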